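/- arXiv:1802.03828 — 6 statements merged into one kernel-verified Lean document; each statement's English description precedes it below -/
import Mathlib

section
/- For every integer k ≥ 2, μ^ctd_l(k) ≥ ρ_l(k−1)/2 and μ^ctd_u(k) ≤ ρ_u(k−1). -/
open Filter

/-- A `k`-clause over `n` propositional variables: a set of `k` literals
(pairs of a variable and a sign) over `k` distinct variables. -/
def Clause (n k : ℕ) : Type :=
  {C : Finset (Fin n × Bool) // C.card = k ∧ (C.image Prod.fst).card = k}

/-- A controlled instance over `A` universal and `E` existential variables,
with `c`-clauses over the existential variables: a function assigning to each
of the `2A` literals over the universal variables a `c`-clause over the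
existential variables. (For `k`-clauses in the matrix, take `c = k - 1`.) -/
def CtdInst (A E c : ℕ) : Type := (Fin A × Bool) → Clause E c

/-- The QBF `∀X∃Y F_f` for a controlled instance `f` is true: for every
assignment `I` of the universal variables there is an assignment `J` of the
existential variables such that every clause `l ∨ f(l)` of the matrix is
satisfied by the combined assignment. -/
def CtdTrue {A E c : ℕ} (f : CtdInst A E c) : Prop :=
  ∀ I : Fin A → Bool, ∃ J : Fin E → Bool, ∀ l : Fin A × Bool,
    I l.1 = l.2 ∨ ∃ p ∈ (f l).val, J p.1 = p.2

/-- `q^ctd(k,A,E)`: the fraction of controlled instances `f` (with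
`(k-1)`-clauses over the existential variables) for which `∀X∃Y F_f` is
true. -/
noncomputable def qCtd (k A E : ℕ) : ℝ :=
  (Nat.card {f : CtdInst A E (k - 1) // CtdTrue f} : ℝ) /
    (Nat.card (CtdInst A E (k - 1)) : ℝ)

/-- The set of `ρ > 0` for which random controlled QBFs with `A = ⌊ρE⌋` are
almost surely true. -/
def ctdTrueSet (k : ℕ) : Set ℝ :=
  {ρ : ℝ | 0 < ρ ∧
    Tendsto (fun E : ℕ => qCtd k ⌊ρ * (E : ℝ)⌋₊ E) atTop (nhds 1)}

/-- The set of `ρ > 0` for which random controlled QBFs with `A = ⌊ρE⌋` are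
almost surely false. -/
def ctdFalseSet (k : ℕ) : Set ℝ :=
  {ρ : ℝ | 0 < ρ ∧
    Tendsto (fun E : ℕ => qCtd k ⌊ρ * (E : ℝ)⌋₊ E) atTop (nhds 0)}

/-- `μ^ctd_l(k)`. -/
noncomputable def muCtdL (k : ℕ) : ℝ := sSup (ctdTrueSet k)

/-- `μ^ctd_u(k)`. -/
noncomputable def muCtdU (k : ℕ) : ℝ := sInf (ctdFalseSet k)

/-- An assignment `σ` satisfies a clause if it agrees with the clause's sign
on at least one variable of the clause. -/
def ClauseSat {n k : ℕ} (σ : Fin n → Bool) (C : Clause n k) : Prop :=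
  ∃ l ∈ C.val, σ l.1 = l.2

/-- A `k`-CNF formula with `m` clauses (an `m`-tuple of `k`-clauses) is
satisfiable if some assignment satisfies all of its clauses. -/
def CNFSat {n k m : ℕ} (F : Fin m → Clause n k) : Prop :=
  ∃ σ : Fin n → Bool, ∀ i, ClauseSat σ (F i)

/-- `pSat k n m` is the fraction of the `m`-tuples of `k`-clauses over an
`n`-element variable set that are satisfiable. -/
noncomputable def pSat (k n m : ℕ) : ℝ :=
  (Nat.card {F : Fin m → Clause n k // CNFSat F} : ℝ) /
    (Nat.card (Fin m → Clause n k) : ℝ)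

/-- The set of `ρ > 0` such that random `k`-CNF formulas with `⌊ρn⌋` clauses
are almost surely satisfiable. -/
def satSet (k : ℕ) : Set ℝ :=
  {ρ : ℝ | 0 < ρ ∧
    Tendsto (fun n : ℕ => pSat k n ⌊ρ * (n : ℝ)⌋₊) atTop (nhds 1)}

/-- The set of `ρ > 0` such that random `k`-CNF formulas with `⌊ρn⌋` clauses
are almost surely unsatisfiable. -/
def unsatSet (k : ℕ) : Set ℝ :=
  {ρ : ℝ | 0 < ρ ∧
    Tendsto (fun n : ℕ => pSat k n ⌊ρ * (n : ℝ)⌋₊) atTop (nhds 0)}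

/-- `ρ_l(k)`. -/
noncomputable def rhoL (k : ℕ) : ℝ := sSup (satSet k)

/-- `ρ_u(k)`. -/
noncomputable def rhoU (k : ℕ) : ℝ := sInf (unsatSet k)

/-
For an assignment `I` of the universal variables, the QBF asks that the `A` clauses `f l` with
`l` falsified by `I` form a satisfiable `(k-1)`-CNF over the existential variables. For `I`
constantly `true` these are the clauses `f (x, false)`, a uniformly random formula with `A`
clauses, so `q^ctd(k,A,E) ≤ p(k-1,E,A)`. Conversely, if all `2A` clauses `f l` are
simultaneously satisfiable the QBF is true, so `p(k-1,E,2A) ≤ q^ctd(k,A,E)`. As `p` is antitone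
in the number of clauses, the thresholds compare as claimed.
-/

instance Clause.instFinite (n k : ℕ) : Finite (Clause n k) := Subtype.finite

instance CtdInst.instFinite (A E c : ℕ) : Finite (CtdInst A E c) :=
  inferInstanceAs (Finite (_ → Clause E c))

section Fraction

variable {α ι κ ι' : Type*}

lemma div_mul_le_div_of_le_mul {a b c d : ℕ} (h : a ≤ d * c) :
    (a : ℝ) / (b * c) ≤ d / b := by
  rcases Nat.eq_zero_or_pos c with rfl | hc
  · simp only [Nat.cast_zero, mul_zero, div_zero]
    positivity
  · calc (a : ℝ) / (b * c) ≤ (d * c : ℝ) / (b * c) := by gcongr; exact_mod_cast h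
      _ = d / b := mul_div_mul_right _ _ (by positivity)

lemma card_subtype_div_card_le_of_restrict [Finite α] [Finite ι] [Finite κ]
    (e : ι ⊕ κ ≃ ι') {P : (ι' → α) → Prop} {Q : (ι → α) → Prop}
    (h : ∀ F, P F → Q (F ∘ e ∘ Sum.inl)) :
    (Nat.card {F // P F} : ℝ) / Nat.card (ι' → α) ≤ Nat.card {G // Q G} / Nat.card (ι → α) := by
  have hcard : Nat.card (ι' → α) = Nat.card (ι → α) * Nat.card (κ → α) := by
    rw [← Nat.card_prod]
    exact Nat.card_congr ((Equiv.arrowCongr e.symm (Equiv.refl α)).trans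
      (Equiv.sumArrowEquivProdArrow ι κ α))
  have hinj : Nat.card {F // P F} ≤ Nat.card ({G // Q G} × (κ → α)) := by
    refine Nat.card_le_card_of_injective
      (fun F => (⟨F.1 ∘ e ∘ Sum.inl, h F.1 F.2⟩, F.1 ∘ e ∘ Sum.inr)) fun F G hFG => ?_
    simp only [Prod.mk.injEq, Subtype.mk.injEq] at hFG
    refine Subtype.ext (funext fun x => ?_)
    obtain ⟨y | y, rfl⟩ := e.surjective x
    exacts [congrFun hFG.1 y, congrFun hFG.2 y]
  rw [hcard, Nat.cast_mul]
  exact div_mul_le_div_of_le_mul (hinj.trans_eq (Nat.card_prod _ _))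

lemma card_subtype_div_card_le_of_equiv [Finite α] [Finite ι]
    (e : ι ≃ ι') {P : (ι' → α) → Prop} {Q : (ι → α) → Prop} (h : ∀ F, P F → Q (F ∘ e)) :
    (Nat.card {F // P F} : ℝ) / Nat.card (ι' → α) ≤ Nat.card {G // Q G} / Nat.card (ι → α) :=
  card_subtype_div_card_le_of_restrict ((Equiv.sumEmpty ι Empty).trans e) h

end Fraction

lemma pSat_antitone (k n : ℕ) : Antitone (pSat k n) := by
  intro m m' hm
  obtain ⟨d, rfl⟩ := Nat.exists_eq_add_of_le hm
  exact card_subtype_div_card_le_of_restrict finSumFinEquiv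
    fun _ ⟨σ, hσ⟩ => ⟨σ, fun _ => hσ _⟩

lemma qCtd_nonneg (k A E : ℕ) : 0 ≤ qCtd k A E := by
  unfold qCtd
  positivity

lemma qCtd_le_one (k A E : ℕ) : qCtd k A E ≤ 1 :=
  div_le_one_of_le₀ (mod_cast Nat.card_le_card_of_injective _ Subtype.val_injective)
    (Nat.cast_nonneg _)

lemma qCtd_le_pSat (k A E : ℕ) : qCtd k A E ≤ pSat (k - 1) E A :=
  card_subtype_div_card_le_of_restrict
    ((Equiv.boolProdEquivSum (Fin A)).symm.trans (Equiv.prodComm _ _)) fun f hf => by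
      obtain ⟨J, hJ⟩ := hf fun _ => true
      exact ⟨J, fun i => (hJ (i, false)).resolve_left Bool.true_eq_false.mp⟩

lemma pSat_add_self_le_qCtd (k A E : ℕ) : pSat (k - 1) E (A + A) ≤ qCtd k A E :=
  card_subtype_div_card_le_of_equiv
    ((Equiv.prodComm _ _).trans ((Equiv.boolProdEquivSum (Fin A)).trans finSumFinEquiv))
    fun _ ⟨σ, hσ⟩ _ => ⟨σ, fun _ => Or.inr (hσ _)⟩

lemma half_mem_ctdTrueSet {k : ℕ} {ρ : ℝ} (hρ : ρ ∈ satSet (k - 1)) :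
    ρ / 2 ∈ ctdTrueSet k := by
  obtain ⟨hρ, hlim⟩ := hρ
  refine ⟨by positivity, tendsto_of_tendsto_of_tendsto_of_le_of_le hlim tendsto_const_nhds
    (fun E => ?_) (fun E => qCtd_le_one k _ E)⟩
  set A := ⌊ρ / 2 * (E : ℝ)⌋₊
  have hA : A + A ≤ ⌊ρ * (E : ℝ)⌋₊ := by
    apply Nat.le_floor
    have : (A : ℝ) ≤ ρ / 2 * E := Nat.floor_le (by positivity)
    push_cast
    linarith
  exact (pSat_antitone (k - 1) E hA).trans (pSat_add_self_le_qCtd k A E)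

lemma unsatSet_subset_ctdFalseSet (k : ℕ) : unsatSet (k - 1) ⊆ ctdFalseSet k :=
  fun _ ⟨hρ, hlim⟩ => ⟨hρ, tendsto_of_tendsto_of_tendsto_of_le_of_le tendsto_const_nhds hlim
    (fun E => qCtd_nonneg k _ E) (fun E => qCtd_le_pSat k _ E)⟩

theorem stmt_5_general (k : ℕ)
    (hne1 : (satSet (k - 1)).Nonempty)
    (hne0 : (unsatSet (k - 1)).Nonempty)
    (hbdd1' : BddAbove (ctdTrueSet k)) :
    rhoL (k - 1) / 2 ≤ muCtdL k ∧ muCtdU k ≤ rhoU (k - 1) := by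
  constructor
  · rw [div_le_iff₀ two_pos]
    refine csSup_le hne1 fun ρ hρ => ?_
    have := le_csSup hbdd1' (half_mem_ctdTrueSet hρ)
    rw [muCtdL]
    linarith
  · exact csInf_le_csInf ⟨0, fun _ hρ => hρ.1.le⟩ hne0 (unsatSet_subset_ctdFalseSet k)

/-- for every integer `k ≥ 2`, `μ^ctd_l(k) ≥ ρ_l(k−1)/2` and
`μ^ctd_u(k) ≤ ρ_u(k−1)`. -/
theorem stmt_5 (k : ℕ) (hk : 2 ≤ k)
    (hne1 : (satSet (k - 1)).Nonempty) (hbdd1 : BddAbove (satSet (k - 1)))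
    (hne0 : (unsatSet (k - 1)).Nonempty)
    (hne1' : (ctdTrueSet k).Nonempty) (hbdd1' : BddAbove (ctdTrueSet k))
    (hne0' : (ctdFalseSet k).Nonempty) :
    rhoL (k - 1) / 2 ≤ muCtdL k ∧ muCtdU k ≤ rhoU (k - 1) :=
  stmt_5_general k hne1 hne0 hbdd1'
end

section
/- For every integer k ≥ 2 and all A ≥ 1, E ≥ k−1 (with k−1 ≤ E), p(k−1, E, 2A) ≤ q^ctd(k,A,E) ≤ p(k−1, E, A), where p(k−1, E, m) denotes the fraction of satisfiable m-tuples of (k−1)-clauses over an E-element variable set. -/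
/-!
If the `2A` clauses `f(l)` are jointly satisfiable, one assignment `J` works for every `I`; so
reindexing `2A`-tuples by the literals maps satisfiable formulas to true instances. Conversely, for
the universal assignment making every positive literal false, `J` must satisfy all `A` clauses
`f(x, true)`; so a true instance has a satisfiable positive half and an arbitrary negative half,
which accounts for the extra factor `N ^ A` in the count, `N` being the number of clauses.
-/

open Filter

/-- Zero when `α` is infinite, as `Nat.card α = 0` then. -/
noncomputable def density (α : Type*) (P : α → Prop) : ℝ :=
  Nat.card {a // P a} / Nat.card α

section density

variable {α β γ : Type*} {P : α → Prop} {Q : β → Prop}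

lemma density_le_density_of_equiv [Finite β] (e : α ≃ β) (h : ∀ a, P a → Q (e a)) :
    density α P ≤ density β Q := by
  unfold density
  rw [Nat.card_congr e]
  gcongr
  exact Nat.card_le_card_of_injective (Subtype.map e h) (Subtype.map_injective h e.injective)

lemma density_le_density_of_equiv_prod [Finite α] [Finite β] {R : γ → Prop} (e : γ ≃ α × β)
    (h : ∀ x, R x → P (e x).1) : density γ R ≤ density α P := by
  unfold density
  have hcard : Nat.card {x // R x} ≤ Nat.card {a // P a} * Nat.card β := by
    rw [← Nat.card_prod]
    refine Nat.card_le_card_of_injective (fun x => (⟨(e x).1, h x x.2⟩, (e x).2)) ?_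
    intro x y hxy
    simp only [Prod.mk.injEq, Subtype.mk.injEq] at hxy
    exact Subtype.ext (e.injective (Prod.ext hxy.1 hxy.2))
  rw [Nat.card_congr e, Nat.card_prod, Nat.cast_mul]
  rcases (Nat.card β).eq_zero_or_pos with hβ | hβ
  · rw [hβ, Nat.cast_zero, mul_zero, div_zero]
    positivity
  calc (Nat.card {x // R x} : ℝ) / (Nat.card α * Nat.card β)
      ≤ (Nat.card {a // P a} * Nat.card β : ℕ) / (Nat.card α * Nat.card β) := by
        gcongr
    _ = Nat.card {a // P a} / Nat.card α := by
        push_cast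
        exact mul_div_mul_right _ _ (by positivity)

end density

section controlled

variable {A E c : ℕ}

instance (n k : ℕ) : Finite (Clause n k) :=
  Subtype.finite

instance : Finite (CtdInst A E c) :=
  inferInstanceAs (Finite ((Fin A × Bool) → Clause E c))

lemma pSat_eq_density (k n m : ℕ) : pSat k n m = density (Fin m → Clause n k) CNFSat := rfl

lemma qCtd_eq_density (k A E : ℕ) : qCtd k A E = density (CtdInst A E (k - 1)) CtdTrue := rfl

lemma ctdTrue_comp_of_cnfSat {m : ℕ} (e : Fin A × Bool → Fin m) {F : Fin m → Clause E c}
    (hF : CNFSat F) : CtdTrue (F ∘ e) := by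
  obtain ⟨σ, hσ⟩ := hF
  exact fun _ => ⟨σ, fun l => Or.inr (hσ (e l))⟩

lemma cnfSat_positive_of_ctdTrue {f : CtdInst A E c} (hf : CtdTrue f) :
    CNFSat fun i => f (i, true) := by
  obtain ⟨J, hJ⟩ := hf fun _ => false
  exact ⟨J, fun i => (hJ (i, true)).resolve_left Bool.false_ne_true⟩

def CtdInst.equivHalves : CtdInst A E c ≃ (Fin A → Clause E c) × (Fin A → Clause E c) where
  toFun f := (fun i => f (i, true), fun i => f (i, false))
  invFun g l := if l.2 then g.1 l.1 else g.2 l.1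
  left_inv f := by funext ⟨i, b⟩; cases b <;> rfl
  right_inv _ := rfl

end controlled

theorem stmt_7_general (k A E : ℕ) :
    pSat (k - 1) E (2 * A) ≤ qCtd k A E ∧ qCtd k A E ≤ pSat (k - 1) E A := by
  rw [pSat_eq_density, pSat_eq_density, qCtd_eq_density]
  let literalsEquiv : Fin A × Bool ≃ Fin (2 * A) := Fintype.equivFinOfCardEq (by simp [mul_comm])
  constructor
  · exact density_le_density_of_equiv (literalsEquiv.symm.arrowCongr (Equiv.refl _))
      fun _ => ctdTrue_comp_of_cnfSat literalsEquiv
  · exact density_le_density_of_equiv_prod CtdInst.equivHalves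
      fun _ => cnfSat_positive_of_ctdTrue

/-- for every integer `k ≥ 2` and all `A ≥ 1`, `E ≥ k−1`,
`p(k−1,E,2A) ≤ q^ctd(k,A,E) ≤ p(k−1,E,A)`. -/
theorem stmt_7 (k A E : ℕ) (hk : 2 ≤ k) (hA : 1 ≤ A) (hE : k - 1 ≤ E) :
    pSat (k - 1) E (2 * A) ≤ qCtd k A E ∧ qCtd k A E ≤ pSat (k - 1) E A :=
  stmt_7_general k A E
end

section
/- Let t ≥ 1, let X, Y be disjoint finite variable sets, let G_1, …, G_t be DNF formulas over X ∪ Y, and let Φ = ∃X∀Y (G_1 ∧ ⋯ ∧ G_t). Then Φ is true if and only if the disjunctive logic program P_Φ has an answer set. -/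
/-- Atoms of the Eiter–Gottlob program: `Sum.inl (z, true)` is the atom `z`,
`Sum.inl (z, false)` is the primed atom `z'` (for `z ∈ X ∪ Y`),
`Sum.inr none` is `w`, and `Sum.inr (some i)` is `w_i`. -/
abbrev EGAtom (X Y : Type*) (t : ℕ) : Type _ := ((X ⊕ Y) × Bool) ⊕ Option (Fin t)

/-- A rule of a disjunctive logic program over atoms `At`: a triple
`(H(r), B⁺(r), B⁻(r))` of head, positive body and negative body. -/
abbrev Rule (At : Type*) : Type _ := Finset At × Finset At × Finset At

/-- `M` is a model of a set of (negation-free) rules: for every rule `r` with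
`B⁺(r) ⊆ M` we have `H(r) ∩ M ≠ ∅`. -/
def IsModel {At : Type*} (P : Set (Rule At)) (M : Set At) : Prop :=
  ∀ r ∈ P, (∀ a ∈ r.2.1, a ∈ M) → ∃ a ∈ r.1, a ∈ M

/-- The reduct `P^M`: the rules `(H(r), B⁺(r), ∅)` for those `r ∈ P` with
`B⁻(r) ∩ M = ∅`. -/
def Reduct {At : Type*} (P : Set (Rule At)) (M : Set At) : Set (Rule At) :=
  {s | ∃ r ∈ P, (∀ a ∈ r.2.2, a ∉ M) ∧ s = (r.1, r.2.1, (∅ : Finset At))}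

/-- `M` is an answer set of `P`: `M` is a model of the reduct `P^M` and no
proper subset of `M` is a model of `P^M`. -/
def IsAnswerSet {At : Type*} (P : Set (Rule At)) (M : Set At) : Prop :=
  IsModel (Reduct P M) M ∧ ∀ M' ⊂ M, ¬ IsModel (Reduct P M) M'

/-- The Eiter–Gottlob program `P_Φ` for the QBF
`Φ = ∃X∀Y (G_1 ∧ ⋯ ∧ G_t)` where each `G i` is a DNF formula given as a tuple
of products (each product a finite set of literals over `X ∪ Y`). -/
def EGProgram {X Y : Type*} [Fintype X] [Fintype Y]
    [DecidableEq X] [DecidableEq Y] {t : ℕ} (m : Fin t → ℕ)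
    (G : (i : Fin t) → Fin (m i) → Finset ((X ⊕ Y) × Bool)) :
    Set (Rule (EGAtom X Y t)) :=
  {r | (∃ z : X ⊕ Y,
          r = ({Sum.inl (z, true), Sum.inl (z, false)}, ∅, ∅))
    ∨ (∃ y : Y, ∃ b : Bool,
          r = ({Sum.inl (Sum.inr y, b)}, {Sum.inr none}, ∅))
    ∨ r = ({Sum.inr none},
           Finset.univ.image (fun i : Fin t => (Sum.inr (some i) : EGAtom X Y t)),
           ∅)
    ∨ r = ({Sum.inr none}, ∅, {Sum.inr none})
    ∨ (∃ i : Fin t, ∃ j : Fin (m i),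
          r = ({Sum.inr (some i)},
               (G i j).image (fun l => (Sum.inl l : EGAtom X Y t)),
               ∅))}

/-- A rule with empty negative body survives into any reduct. -/
theorem EG.reduct_mem {At : Type*} {P : Set (Rule At)} {M : Set At} {H B : Finset At}
    (h : (H, B, (∅ : Finset At)) ∈ P) : (H, B, (∅ : Finset At)) ∈ Reduct P M :=
  ⟨_, h, by simp, rfl⟩

/-- The candidate answer set determined by an assignment `I` on `X`. -/
def EG.sigmaSet {X Y : Type*} (t : ℕ) (I : X → Bool) : Set (EGAtom X Y t) :=
  {a | ∀ x b, a = Sum.inl (Sum.inl x, b) → I x = b}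

theorem EG.mem_sigmaSet_x {X Y : Type*} {t : ℕ} {I : X → Bool} (x : X) (b : Bool) :
    (Sum.inl (Sum.inl x, b) : EGAtom X Y t) ∈ EG.sigmaSet t I ↔ I x = b := by
  constructor
  · intro h; exact h x b rfl
  · rintro h x' b' he
    simp only [Sum.inl.injEq, Prod.mk.injEq] at he
    obtain ⟨rfl, rfl⟩ := he
    exact h

theorem EG.mem_sigmaSet_y {X Y : Type*} {t : ℕ} {I : X → Bool} (y : Y) (b : Bool) :
    (Sum.inl (Sum.inr y, b) : EGAtom X Y t) ∈ EG.sigmaSet t I := by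
  rintro x b' he; simp at he

theorem EG.mem_sigmaSet_r {X Y : Type*} {t : ℕ} {I : X → Bool} (o : Option (Fin t)) :
    (Sum.inr o : EGAtom X Y t) ∈ EG.sigmaSet t I := by
  rintro x b' he; simp at he

/-- The smaller interpretation determined by a total assignment `K` on `X ⊕ Y`. -/
def EG.primeSet {X Y : Type*} {t : ℕ} (m : Fin t → ℕ)
    (G : (i : Fin t) → Fin (m i) → Finset ((X ⊕ Y) × Bool))
    (K : X ⊕ Y → Bool) : Set (EGAtom X Y t) :=
  {a | (∃ z b, a = Sum.inl (z, b) ∧ K z = b) ∨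
       (∃ i', a = Sum.inr (some i') ∧ ∃ j, ∀ l ∈ G i' j, K l.1 = l.2)}

theorem EG.mem_primeSet_inl {X Y : Type*} {t : ℕ} {m : Fin t → ℕ}
    {G : (i : Fin t) → Fin (m i) → Finset ((X ⊕ Y) × Bool)} {K : X ⊕ Y → Bool}
    (z : X ⊕ Y) (b : Bool) :
    (Sum.inl (z, b) : EGAtom X Y t) ∈ EG.primeSet m G K ↔ K z = b := by
  constructor
  · rintro (⟨z', b', he, hs⟩ | ⟨i', he, _⟩)
    · simp only [Sum.inl.injEq, Prod.mk.injEq] at he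
      obtain ⟨rfl, rfl⟩ := he
      exact hs
    · simp at he
  · intro h; exact Or.inl ⟨z, b, rfl, h⟩

theorem EG.mem_primeSet_some {X Y : Type*} {t : ℕ} {m : Fin t → ℕ}
    {G : (i : Fin t) → Fin (m i) → Finset ((X ⊕ Y) × Bool)} {K : X ⊕ Y → Bool}
    (i : Fin t) :
    (Sum.inr (some i) : EGAtom X Y t) ∈ EG.primeSet m G K ↔
      ∃ j, ∀ l ∈ G i j, K l.1 = l.2 := by
  constructor
  · rintro (⟨z', b', he, hs⟩ | ⟨i', he, hj⟩)
    · simp at he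
    · simp only [Sum.inr.injEq, Option.some.injEq] at he
      subst he; exact hj
  · intro h; exact Or.inr ⟨i, rfl, h⟩

theorem EG.not_mem_primeSet_none {X Y : Type*} {t : ℕ} {m : Fin t → ℕ}
    {G : (i : Fin t) → Fin (m i) → Finset ((X ⊕ Y) × Bool)} {K : X ⊕ Y → Bool} :
    (Sum.inr none : EGAtom X Y t) ∉ EG.primeSet m G K := by
  rintro (⟨z', b', he, _⟩ | ⟨i', he, _⟩) <;> simp at he

/-- for disjoint finite variable sets `X`, `Y` and DNF formulas
`G_1, …, G_t` over `X ∪ Y` (each product a set of literals over distinct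
variables), the QBF `Φ = ∃X∀Y (G_1 ∧ ⋯ ∧ G_t)` is true if and only if the
disjunctive logic program `P_Φ` has an answer set. -/
theorem stmt_10 {X Y : Type*} [Fintype X] [Fintype Y]
    [DecidableEq X] [DecidableEq Y] {t : ℕ} (ht : 1 ≤ t) (m : Fin t → ℕ)
    (G : (i : Fin t) → Fin (m i) → Finset ((X ⊕ Y) × Bool))
    (hG : ∀ i j, ((G i j).image Prod.fst).card = (G i j).card) :
    (∃ I : X → Bool, ∀ J : Y → Bool, ∀ i : Fin t, ∃ j : Fin (m i),
        ∀ l ∈ G i j, Sum.elim I J l.1 = l.2) ↔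
    (∃ M : Set (EGAtom X Y t), IsAnswerSet (EGProgram m G) M) := by
  classical
  constructor
  · -- Forward direction
    rintro ⟨I, hI⟩
    refine ⟨EG.sigmaSet t I, ?_, ?_⟩
    · -- model of the reduct
      rintro s ⟨r, hrP, hneg, rfl⟩ hbody
      rcases hrP with ⟨z, rfl⟩ | ⟨y, b, rfl⟩ | rfl | rfl | ⟨i, j, rfl⟩
      · cases z with
        | inl x =>
          refine ⟨Sum.inl (Sum.inl x, I x), ?_, (EG.mem_sigmaSet_x x (I x)).2 rfl⟩
          cases I x <;> simp
        | inr y => exact ⟨Sum.inl (Sum.inr y, true), by simp, EG.mem_sigmaSet_y y true⟩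
      · exact ⟨Sum.inl (Sum.inr y, b), by simp, EG.mem_sigmaSet_y y b⟩
      · exact ⟨Sum.inr none, by simp, EG.mem_sigmaSet_r none⟩
      · exact absurd (EG.mem_sigmaSet_r (X := X) (Y := Y) (I := I) none)
          (hneg (Sum.inr none) (by simp))
      · exact ⟨Sum.inr (some i), by simp, EG.mem_sigmaSet_r (some i)⟩
    · -- minimality
      intro M' hss hmod'
      have hsub : M' ⊆ EG.sigmaSet t I := hss.1
      -- reduct membership for the rules with empty negative body
      have hr1 : ∀ z : X ⊕ Y,
          (({Sum.inl (z, true), Sum.inl (z, false)} : Finset (EGAtom X Y t)),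
            (∅ : Finset (EGAtom X Y t)), (∅ : Finset (EGAtom X Y t))) ∈
            Reduct (EGProgram m G) (EG.sigmaSet t I) :=
        fun z => EG.reduct_mem (Or.inl ⟨z, rfl⟩)
      have hr2 : ∀ (y : Y) (b : Bool),
          (({Sum.inl (Sum.inr y, b)} : Finset (EGAtom X Y t)),
            ({Sum.inr none} : Finset (EGAtom X Y t)), (∅ : Finset (EGAtom X Y t))) ∈
            Reduct (EGProgram m G) (EG.sigmaSet t I) :=
        fun y b => EG.reduct_mem (Or.inr (Or.inl ⟨y, b, rfl⟩))
      have hr3 :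
          (({Sum.inr none} : Finset (EGAtom X Y t)),
            Finset.univ.image (fun i : Fin t => (Sum.inr (some i) : EGAtom X Y t)),
            (∅ : Finset (EGAtom X Y t))) ∈
            Reduct (EGProgram m G) (EG.sigmaSet t I) :=
        EG.reduct_mem (Or.inr (Or.inr (Or.inl rfl)))
      have hr5 : ∀ (i : Fin t) (j : Fin (m i)),
          (({Sum.inr (some i)} : Finset (EGAtom X Y t)),
            (G i j).image (fun l => (Sum.inl l : EGAtom X Y t)),
            (∅ : Finset (EGAtom X Y t))) ∈
            Reduct (EGProgram m G) (EG.sigmaSet t I) :=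
        fun i j => EG.reduct_mem (Or.inr (Or.inr (Or.inr (Or.inr ⟨i, j, rfl⟩))))
      -- each x-atom (x, I x) is in M'
      have hX : ∀ x : X, (Sum.inl (Sum.inl x, I x) : EGAtom X Y t) ∈ M' := by
        intro x
        obtain ⟨a, ha, haM'⟩ := hmod' _ (hr1 (Sum.inl x)) (by simp)
        simp only [Finset.mem_insert, Finset.mem_singleton] at ha
        rcases ha with rfl | rfl
        · have hb := (EG.mem_sigmaSet_x x true).1 (hsub haM')
          rw [hb]; exact haM'
        · have hb := (EG.mem_sigmaSet_x x false).1 (hsub haM')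
          rw [hb]; exact haM'
      -- w ∈ M'
      have hwM' : (Sum.inr none : EGAtom X Y t) ∈ M' := by
        by_contra hw
        have hYc : ∀ y : Y, ∃ b, (Sum.inl (Sum.inr y, b) : EGAtom X Y t) ∈ M' := by
          intro y
          obtain ⟨a, ha, haM'⟩ := hmod' _ (hr1 (Sum.inr y)) (by simp)
          simp only [Finset.mem_insert, Finset.mem_singleton] at ha
          rcases ha with rfl | rfl
          exacts [⟨true, haM'⟩, ⟨false, haM'⟩]
        choose J hJ using hYc
        have hWi : ∀ i : Fin t, (Sum.inr (some i) : EGAtom X Y t) ∈ M' := by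
          intro i
          obtain ⟨j, hj⟩ := hI J i
          have hbody : ∀ a ∈ (G i j).image (fun l => (Sum.inl l : EGAtom X Y t)),
              a ∈ M' := by
            intro a ha
            rw [Finset.mem_image] at ha
            obtain ⟨l, hl, rfl⟩ := ha
            rcases l with ⟨x | y, b⟩
            · have hs : I x = b := by simpa using hj _ hl
              exact hs ▸ hX x
            · have hs : J y = b := by simpa using hj _ hl
              exact hs ▸ hJ y
          obtain ⟨a, ha, haM'⟩ := hmod' _ (hr5 i j) hbody
          simp only [Finset.mem_singleton] at ha
          subst ha; exact haM'
        obtain ⟨a, ha, haM'⟩ := hmod' _ hr3 (by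
          intro a ha
          simp only [Finset.mem_image, Finset.mem_univ, true_and] at ha
          obtain ⟨i, rfl⟩ := ha
          exact hWi i)
        simp only [Finset.mem_singleton] at ha
        subst ha; exact hw haM'
      -- all y-atoms ∈ M'
      have hYall : ∀ (y : Y) (b : Bool), (Sum.inl (Sum.inr y, b) : EGAtom X Y t) ∈ M' := by
        intro y b
        obtain ⟨a, ha, haM'⟩ := hmod' _ (hr2 y b) (by simpa using hwM')
        simp only [Finset.mem_singleton] at ha
        subst ha; exact haM'
      -- all w_i ∈ M'
      have hWi : ∀ i : Fin t, (Sum.inr (some i) : EGAtom X Y t) ∈ M' := by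
        intro i
        obtain ⟨j, hj⟩ := hI (fun _ => true) i
        have hbody : ∀ a ∈ (G i j).image (fun l => (Sum.inl l : EGAtom X Y t)),
            a ∈ M' := by
          intro a ha
          rw [Finset.mem_image] at ha
          obtain ⟨l, hl, rfl⟩ := ha
          rcases l with ⟨x | y, b⟩
          · have hs : I x = b := by simpa using hj _ hl
            exact hs ▸ hX x
          · exact hYall y b
        obtain ⟨a, ha, haM'⟩ := hmod' _ (hr5 i j) hbody
        simp only [Finset.mem_singleton] at ha
        subst ha; exact haM'
      -- hence M ⊆ M', contradicting M' ⊂ M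
      refine hss.2 ?_
      intro a haM
      rcases a with ⟨z, b⟩ | o
      · rcases z with x | y
        · have hb := (EG.mem_sigmaSet_x x b).1 haM
          exact hb ▸ hX x
        · exact hYall y b
      · rcases o with _ | i
        · exact hwM'
        · exact hWi i
  · -- Backward direction
    rintro ⟨M, hmodM, hminM⟩
    -- w ∈ M
    have hw : (Sum.inr none : EGAtom X Y t) ∈ M := by
      by_contra hw
      have h4 : (({Sum.inr none} : Finset (EGAtom X Y t)),
          (∅ : Finset (EGAtom X Y t)), (∅ : Finset (EGAtom X Y t))) ∈
          Reduct (EGProgram m G) M := by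
        refine ⟨_, Or.inr (Or.inr (Or.inr (Or.inl rfl))), ?_, rfl⟩
        simpa using hw
      obtain ⟨a, ha, haM⟩ := hmodM _ h4 (by simp)
      simp only [Finset.mem_singleton] at ha
      subst ha; exact hw haM
    have hr1 : ∀ z : X ⊕ Y,
        (({Sum.inl (z, true), Sum.inl (z, false)} : Finset (EGAtom X Y t)),
          (∅ : Finset (EGAtom X Y t)), (∅ : Finset (EGAtom X Y t))) ∈
          Reduct (EGProgram m G) M :=
      fun z => EG.reduct_mem (Or.inl ⟨z, rfl⟩)
    have hr2 : ∀ (y : Y) (b : Bool),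
        (({Sum.inl (Sum.inr y, b)} : Finset (EGAtom X Y t)),
          ({Sum.inr none} : Finset (EGAtom X Y t)), (∅ : Finset (EGAtom X Y t))) ∈
          Reduct (EGProgram m G) M :=
      fun y b => EG.reduct_mem (Or.inr (Or.inl ⟨y, b, rfl⟩))
    have hr5 : ∀ (i : Fin t) (j : Fin (m i)),
        (({Sum.inr (some i)} : Finset (EGAtom X Y t)),
          (G i j).image (fun l => (Sum.inl l : EGAtom X Y t)),
          (∅ : Finset (EGAtom X Y t))) ∈
          Reduct (EGProgram m G) M :=
      fun i j => EG.reduct_mem (Or.inr (Or.inr (Or.inr (Or.inr ⟨i, j, rfl⟩))))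
    -- all y-atoms ∈ M
    have hy : ∀ (y : Y) (b : Bool), (Sum.inl (Sum.inr y, b) : EGAtom X Y t) ∈ M := by
      intro y b
      obtain ⟨a, ha, haM⟩ := hmodM _ (hr2 y b) (by simpa using hw)
      simp only [Finset.mem_singleton] at ha
      subst ha; exact haM
    -- choose I
    have hXc : ∀ x : X, ∃ b, (Sum.inl (Sum.inl x, b) : EGAtom X Y t) ∈ M := by
      intro x
      obtain ⟨a, ha, haM⟩ := hmodM _ (hr1 (Sum.inl x)) (by simp)
      simp only [Finset.mem_insert, Finset.mem_singleton] at ha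
      rcases ha with rfl | rfl
      exacts [⟨true, haM⟩, ⟨false, haM⟩]
    choose I hIc using hXc
    refine ⟨I, ?_⟩
    intro J i
    by_contra hni
    push_neg at hni
    set K : X ⊕ Y → Bool := Sum.elim I J with hK
    -- M' := primeSet is a model of the reduct, strictly below M : contradiction
    have hsub : EG.primeSet m G K ⊆ M := by
      rintro a (⟨z, b, rfl, hs⟩ | ⟨i', rfl, j, hj⟩)
      · rcases z with x | y
        · have hs' : I x = b := by simpa [hK] using hs
          exact hs' ▸ hIc x
        · exact hy y b
      · have hbody : ∀ a ∈ (G i' j).image (fun l => (Sum.inl l : EGAtom X Y t)),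
            a ∈ M := by
          intro a ha
          rw [Finset.mem_image] at ha
          obtain ⟨l, hl, rfl⟩ := ha
          rcases l with ⟨x | y, b⟩
          · have hs' : I x = b := by simpa [hK] using hj _ hl
            exact hs' ▸ hIc x
          · exact hy y b
        obtain ⟨a, ha, haM⟩ := hmodM _ (hr5 i' j) hbody
        simp only [Finset.mem_singleton] at ha
        subst ha; exact haM
    have hne : EG.primeSet m G K ≠ M := by
      intro h
      exact EG.not_mem_primeSet_none (m := m) (G := G) (K := K) (h ▸ hw)
    refine hminM (EG.primeSet m G K) (hsub.ssubset_of_ne hne) ?_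
    rintro s ⟨r, hrP, hneg, rfl⟩ hbody
    rcases hrP with ⟨z, rfl⟩ | ⟨y, b, rfl⟩ | rfl | rfl | ⟨i', j, rfl⟩
    · refine ⟨Sum.inl (z, K z), ?_, (EG.mem_primeSet_inl z (K z)).2 rfl⟩
      cases h : K z <;> simp [h]
    · exact absurd (hbody _ (by simp))
        (EG.not_mem_primeSet_none (m := m) (G := G) (K := K))
    · have hmem : (Sum.inr (some i) : EGAtom X Y t) ∈ EG.primeSet m G K :=
        hbody _ (by simp)
      obtain ⟨j, hj⟩ := (EG.mem_primeSet_some i).1 hmem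
      obtain ⟨l, hl, hne'⟩ := hni j
      exact absurd (hj l hl) hne'
    · exact absurd hw (hneg _ (by simp))
    · refine ⟨Sum.inr (some i'), by simp, (EG.mem_primeSet_some i').2 ⟨j, ?_⟩⟩
      intro l hl
      have hmem := hbody (Sum.inl l) (Finset.mem_image_of_mem _ hl)
      exact (EG.mem_primeSet_inl l.1 l.2).1 hmem
end

section
/- Let t ≥ 1, let X, Y be disjoint finite variable sets, let F_1, …, F_t be CNF formulas of mixed clauses over X ∪ Y, and let Φ = ∀X∃Y (F_1 ∨ ⋯ ∨ F_t). Let Φ̄ = ∃X∀Y (G_1 ∧ ⋯ ∧ G_t), where G_i is the DNF formula obtained from ¬F_i by De Morgan's laws: each clause of F_i is replaced by the product consisting of the complementary literals of its literals. Then Φ is false if and only if the disjunctive logic program P_{Φ̄} has an answer set. -/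
/-- let `F_1, …, F_t` be CNF formulas of mixed clauses over
`X ∪ Y` and `Φ = ∀X∃Y (F_1 ∨ ⋯ ∨ F_t)`. Let `Φ̄ = ∃X∀Y (G_1 ∧ ⋯ ∧ G_t)`,
where `G_i` is obtained from `¬F_i` by De Morgan's laws (each clause of `F_i`
becomes the product of the complementary literals). Then `Φ` is false if and
only if the program `P_{Φ̄}` has an answer set. -/
theorem stmt_11 {X Y : Type*} [Fintype X] [Fintype Y]
    [DecidableEq X] [DecidableEq Y] {t : ℕ} (ht : 1 ≤ t) (m : Fin t → ℕ)
    (F : (i : Fin t) → Fin (m i) → Finset ((X ⊕ Y) × Bool))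
    (hF : ∀ i j, ((F i j).image Prod.fst).card = (F i j).card) :
    (¬ ∀ I : X → Bool, ∃ J : Y → Bool, ∃ i : Fin t, ∀ j : Fin (m i),
        ∃ l ∈ F i j, Sum.elim I J l.1 = l.2) ↔
    (∃ M : Set (EGAtom X Y t),
      IsAnswerSet
        (EGProgram m (fun i j => (F i j).image (fun l => (l.1, !l.2)))) M) := by

  classical
  have bne : ∀ a b : Bool, a ≠ b → a = !b := by decide
  set P := EGProgram m (fun i j => (F i j).image (fun l => (l.1, !l.2))) with hPdef
  -- reduct membership helpers (all rules with empty negative body stay in every reduct)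
  have hRdisj : ∀ (M : Set (EGAtom X Y t)) (z : X ⊕ Y),
      (({Sum.inl (z, true), Sum.inl (z, false)} : Finset (EGAtom X Y t)),
        (∅ : Finset (EGAtom X Y t)), (∅ : Finset (EGAtom X Y t))) ∈ Reduct P M := by
    intro M z
    refine ⟨({Sum.inl (z, true), Sum.inl (z, false)}, ∅, ∅), ?_, by simp, rfl⟩
    rw [hPdef]; simp only [EGProgram, Set.mem_setOf_eq]
    exact Or.inl ⟨z, rfl⟩
  have hRyw : ∀ (M : Set (EGAtom X Y t)) (y : Y) (b : Bool),
      (({Sum.inl (Sum.inr y, b)} : Finset (EGAtom X Y t)),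
        ({Sum.inr none} : Finset (EGAtom X Y t)),
        (∅ : Finset (EGAtom X Y t))) ∈ Reduct P M := by
    intro M y b
    refine ⟨({Sum.inl (Sum.inr y, b)}, {Sum.inr none}, ∅), ?_, by simp, rfl⟩
    rw [hPdef]; simp only [EGProgram, Set.mem_setOf_eq]
    exact Or.inr (Or.inl ⟨y, b, rfl⟩)
  have hRw : ∀ (M : Set (EGAtom X Y t)),
      (({Sum.inr none} : Finset (EGAtom X Y t)),
        Finset.univ.image (fun i : Fin t => (Sum.inr (some i) : EGAtom X Y t)),
        (∅ : Finset (EGAtom X Y t))) ∈ Reduct P M := by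
    intro M
    refine ⟨({Sum.inr none},
      Finset.univ.image (fun i : Fin t => (Sum.inr (some i) : EGAtom X Y t)), ∅),
      ?_, by simp, rfl⟩
    rw [hPdef]; simp only [EGProgram, Set.mem_setOf_eq]
    exact Or.inr (Or.inr (Or.inl trivial))
  have hRwi : ∀ (M : Set (EGAtom X Y t)) (i : Fin t) (j : Fin (m i)),
      (({Sum.inr (some i)} : Finset (EGAtom X Y t)),
        ((F i j).image (fun l => (l.1, !l.2))).image
          (fun l => (Sum.inl l : EGAtom X Y t)),
        (∅ : Finset (EGAtom X Y t))) ∈ Reduct P M := by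
    intro M i j
    refine ⟨({Sum.inr (some i)},
      ((F i j).image (fun l => (l.1, !l.2))).image
        (fun l => (Sum.inl l : EGAtom X Y t)), ∅), ?_, by simp, rfl⟩
    rw [hPdef]; simp only [EGProgram, Set.mem_setOf_eq]
    exact Or.inr (Or.inr (Or.inr (Or.inr ⟨i, j, rfl⟩)))
  constructor
  · -- Φ false ⇒ answer set exists
    intro hΦ
    push_neg at hΦ
    obtain ⟨I, hI⟩ := hΦ
    set M : Set (EGAtom X Y t) := fun a => match a with
      | Sum.inl (Sum.inl x, b) => I x = b
      | Sum.inl (Sum.inr _, _) => True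
      | Sum.inr _ => True with hMdef
    have hxM : ∀ x b, ((Sum.inl (Sum.inl x, b) : EGAtom X Y t) ∈ M ↔ I x = b) :=
      fun _ _ => Iff.rfl
    have hyM : ∀ y b, (Sum.inl (Sum.inr y, b) : EGAtom X Y t) ∈ M := fun _ _ => trivial
    have hwM : (Sum.inr none : EGAtom X Y t) ∈ M := trivial
    have hwiM : ∀ i, (Sum.inr (some i) : EGAtom X Y t) ∈ M := fun _ => trivial
    refine ⟨M, ?_, ?_⟩
    · -- M is a model of the reduct
      intro s hs
      obtain ⟨r, hrP, hneg, rfl⟩ := hs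
      rw [hPdef] at hrP
      simp only [EGProgram, Set.mem_setOf_eq] at hrP
      rcases hrP with ⟨z, rfl⟩ | ⟨y, b, rfl⟩ | rfl | rfl | ⟨i, j, rfl⟩
      · intro _
        rcases z with x | y
        · exact ⟨Sum.inl (Sum.inl x, I x), by cases h : I x <;> simp, (hxM x _).2 rfl⟩
        · exact ⟨Sum.inl (Sum.inr y, true), by simp, hyM y true⟩
      · intro _
        exact ⟨Sum.inl (Sum.inr y, b), by simp, hyM y b⟩
      · intro _
        exact ⟨Sum.inr none, by simp, hwM⟩
      · exact absurd hwM (hneg (Sum.inr none) (by simp))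
      · intro _
        exact ⟨Sum.inr (some i), by simp, hwiM i⟩
    · -- minimality
      intro M' hss hmod
      obtain ⟨hsub, hne⟩ := Set.ssubset_iff_subset_ne.mp hss
      have hxI : ∀ x : X, (Sum.inl (Sum.inl x, I x) : EGAtom X Y t) ∈ M' := by
        intro x
        have h2 := hmod _ (hRdisj M (Sum.inl x)) (by simp)
        simp only [Finset.mem_insert, Finset.mem_singleton] at h2
        obtain ⟨a, rfl | rfl, ha2⟩ := h2
        · have hb := (hxM x true).1 (hsub ha2)
          rw [hb]; exact ha2
        · have hb := (hxM x false).1 (hsub ha2)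
          rw [hb]; exact ha2
      by_cases hw' : (Sum.inr none : EGAtom X Y t) ∈ M'
      · -- then M ⊆ M', contradiction with properness
        have hyM' : ∀ y b, (Sum.inl (Sum.inr y, b) : EGAtom X Y t) ∈ M' := by
          intro y b
          have h2 := hmod _ (hRyw M y b) (by
            intro a ha
            rw [Finset.mem_singleton] at ha
            subst ha; exact hw')
          simpa using h2
        have hwiM' : ∀ i, (Sum.inr (some i) : EGAtom X Y t) ∈ M' := by
          intro i
          obtain ⟨j, hj⟩ := hI (fun _ => true) i
          have hbody : ∀ a ∈ ((F i j).image (fun l => (l.1, !l.2))).image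
              (fun l => (Sum.inl l : EGAtom X Y t)), a ∈ M' := by
            intro a ha
            simp only [Finset.mem_image] at ha
            obtain ⟨l', ⟨l, hl, rfl⟩, rfl⟩ := ha
            obtain ⟨z, b⟩ := l
            have hne2 := hj _ hl
            rcases z with x | y
            · simp only [Sum.elim_inl] at hne2
              exact (bne _ _ hne2) ▸ hxI x
            · exact hyM' y _
          have h2 := hmod _ (hRwi M i j) hbody
          simpa using h2
        have hMM' : M ⊆ M' := by
          intro a haM
          rcases a with ⟨x | y, b⟩ | (_ | i)
          · have hb := (hxM x b).1 haM
            exact hb ▸ hxI x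
          · exact hyM' y b
          · exact hw'
          · exact hwiM' i
        exact hne (Set.Subset.antisymm hsub hMM')
      · -- w ∉ M' : derive w ∈ M' for a contradiction
        set J : Y → Bool := fun y =>
          if (Sum.inl (Sum.inr y, true) : EGAtom X Y t) ∈ M' then true else false with hJdef
        have hJ : ∀ y b, J y = b → (Sum.inl (Sum.inr y, b) : EGAtom X Y t) ∈ M' := by
          intro y b hb
          cases b
          · by_cases hy : (Sum.inl (Sum.inr y, true) : EGAtom X Y t) ∈ M'
            · simp [hJdef, hy] at hb
            · have h2 := hmod _ (hRdisj M (Sum.inr y)) (by simp)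
              simp only [Finset.mem_insert, Finset.mem_singleton] at h2
              obtain ⟨a, rfl | rfl, ha⟩ := h2
              · exact absurd ha hy
              · exact ha
          · by_cases hy : (Sum.inl (Sum.inr y, true) : EGAtom X Y t) ∈ M'
            · exact hy
            · simp [hJdef, hy] at hb
        have hwi' : ∀ i, (Sum.inr (some i) : EGAtom X Y t) ∈ M' := by
          intro i
          obtain ⟨j, hj⟩ := hI J i
          have hbody : ∀ a ∈ ((F i j).image (fun l => (l.1, !l.2))).image
              (fun l => (Sum.inl l : EGAtom X Y t)), a ∈ M' := by
            intro a ha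
            simp only [Finset.mem_image] at ha
            obtain ⟨l', ⟨l, hl, rfl⟩, rfl⟩ := ha
            obtain ⟨z, b⟩ := l
            have hne2 := hj _ hl
            rcases z with x | y
            · simp only [Sum.elim_inl] at hne2
              exact (bne _ _ hne2) ▸ hxI x
            · simp only [Sum.elim_inr] at hne2
              exact hJ y _ (bne _ _ hne2)
          have h2 := hmod _ (hRwi M i j) hbody
          simpa using h2
        have hbw : ∀ a ∈ Finset.univ.image
            (fun i : Fin t => (Sum.inr (some i) : EGAtom X Y t)), a ∈ M' := by
          intro a ha
          simp only [Finset.mem_image, Finset.mem_univ, true_and] at ha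
          obtain ⟨i, rfl⟩ := ha
          exact hwi' i
        have h2 := hmod _ (hRw M) hbw
        exact hw' (by simpa using h2)
  · -- answer set exists ⇒ Φ false
    rintro ⟨M, hmodM, hmin⟩
    have hwM : (Sum.inr none : EGAtom X Y t) ∈ M := by
      by_contra hw
      have hmem : (({Sum.inr none} : Finset (EGAtom X Y t)), (∅ : Finset (EGAtom X Y t)),
          (∅ : Finset (EGAtom X Y t))) ∈ Reduct P M := by
        refine ⟨({Sum.inr none}, ∅, {Sum.inr none}), ?_, ?_, rfl⟩
        · rw [hPdef]; simp only [EGProgram, Set.mem_setOf_eq]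
          exact Or.inr (Or.inr (Or.inr (Or.inl trivial)))
        · intro a ha
          rw [Finset.mem_singleton] at ha
          subst ha; exact hw
      have h2 := hmodM _ hmem (by simp)
      exact hw (by simpa using h2)
    have hzM : ∀ z : X ⊕ Y, (Sum.inl (z, true) : EGAtom X Y t) ∈ M ∨
        (Sum.inl (z, false) : EGAtom X Y t) ∈ M := by
      intro z
      have h2 := hmodM _ (hRdisj M z) (by simp)
      simp only [Finset.mem_insert, Finset.mem_singleton] at h2
      obtain ⟨a, rfl | rfl, ha⟩ := h2
      exacts [Or.inl ha, Or.inr ha]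
    have hyM : ∀ y b, (Sum.inl (Sum.inr y, b) : EGAtom X Y t) ∈ M := by
      intro y b
      have h2 := hmodM _ (hRyw M y b) (by
        intro a ha
        rw [Finset.mem_singleton] at ha
        subst ha; exact hwM)
      simpa using h2
    have hnotboth : ∀ x : X, ¬ ((Sum.inl (Sum.inl x, true) : EGAtom X Y t) ∈ M ∧
        (Sum.inl (Sum.inl x, false) : EGAtom X Y t) ∈ M) := by
      rintro x ⟨h1, h0⟩
      have hssub : M \ {Sum.inl (Sum.inl x, false)} ⊂ M := by
        refine Set.ssubset_iff_subset_ne.mpr ⟨Set.diff_subset, fun he => ?_⟩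
        have : (Sum.inl (Sum.inl x, false) : EGAtom X Y t) ∈
            M \ {Sum.inl (Sum.inl x, false)} := he.symm ▸ h0
        simp at this
      apply hmin _ hssub
      intro s hs
      obtain ⟨r, hrP, hneg, rfl⟩ := hs
      rw [hPdef] at hrP
      simp only [EGProgram, Set.mem_setOf_eq] at hrP
      rcases hrP with ⟨z, rfl⟩ | ⟨y, b, rfl⟩ | rfl | rfl | ⟨i, j, rfl⟩
      · intro _
        rcases hzM z with h | h
        · exact ⟨Sum.inl (z, true), by simp, h, by simp⟩
        · by_cases hz : z = Sum.inl x
          · subst hz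
            exact ⟨Sum.inl (Sum.inl x, true), by simp, h1, by simp⟩
          · exact ⟨Sum.inl (z, false), by simp, h, by simp [hz]⟩
      · intro _
        exact ⟨Sum.inl (Sum.inr y, b), by simp, hyM y b, by simp⟩
      · intro _
        exact ⟨Sum.inr none, by simp, hwM, by simp⟩
      · exact absurd hwM (hneg (Sum.inr none) (by simp))
      · intro hbody
        have hb2 : ∀ a ∈ ((F i j).image (fun l => (l.1, !l.2))).image
            (fun l => (Sum.inl l : EGAtom X Y t)), a ∈ M :=
          fun a ha => (hbody a ha).1
        have h2 := hmodM _ (hRwi M i j) hb2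
        exact ⟨Sum.inr (some i), by simp, by simpa using h2, by simp⟩
    set I : X → Bool := fun x =>
      if (Sum.inl (Sum.inl x, true) : EGAtom X Y t) ∈ M then true else false with hIdef
    have hxiff : ∀ x b, ((Sum.inl (Sum.inl x, b) : EGAtom X Y t) ∈ M ↔ I x = b) := by
      intro x b
      cases b
      · constructor
        · intro h
          have hnt : (Sum.inl (Sum.inl x, true) : EGAtom X Y t) ∉ M :=
            fun h' => hnotboth x ⟨h', h⟩
          simp [hIdef, hnt]
        · intro h
          have hnt : (Sum.inl (Sum.inl x, true) : EGAtom X Y t) ∉ M := by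
            intro h'
            simp [hIdef, h'] at h
          rcases hzM (Sum.inl x) with h' | h'
          · exact absurd h' hnt
          · exact h'
      · constructor
        · intro h; simp [hIdef, h]
        · intro h
          by_contra hm
          simp [hIdef, hm] at h
    intro hall
    obtain ⟨J, i, hcon⟩ := hall I
    set M' : Set (EGAtom X Y t) := fun a => match a with
      | Sum.inl (Sum.inl x, b) => I x = b
      | Sum.inl (Sum.inr y, b) => J y = b
      | Sum.inr none => False
      | Sum.inr (some i') => ∃ j : Fin (m i'), ∀ l ∈ F i' j, Sum.elim I J l.1 = !l.2
      with hM'def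
    have mx : ∀ x b, ((Sum.inl (Sum.inl x, b) : EGAtom X Y t) ∈ M' ↔ I x = b) :=
      fun _ _ => Iff.rfl
    have my : ∀ y b, ((Sum.inl (Sum.inr y, b) : EGAtom X Y t) ∈ M' ↔ J y = b) :=
      fun _ _ => Iff.rfl
    have mw : ((Sum.inr none : EGAtom X Y t) ∈ M') ↔ False := Iff.rfl
    have mwi : ∀ i', ((Sum.inr (some i') : EGAtom X Y t) ∈ M' ↔
        ∃ j : Fin (m i'), ∀ l ∈ F i' j, Sum.elim I J l.1 = !l.2) := fun _ => Iff.rfl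
    have hsubM : M' ⊆ M := by
      intro a ha
      rcases a with ⟨x | y, b⟩ | (_ | i')
      · exact (hxiff x b).2 ((mx x b).1 ha)
      · exact hyM y b
      · exact (mw.1 ha).elim
      · obtain ⟨j, hj⟩ := (mwi i').1 ha
        have hbody : ∀ a ∈ ((F i' j).image (fun l => (l.1, !l.2))).image
            (fun l => (Sum.inl l : EGAtom X Y t)), a ∈ M := by
          intro a ha2
          simp only [Finset.mem_image] at ha2
          obtain ⟨l', ⟨l, hl, rfl⟩, rfl⟩ := ha2
          obtain ⟨z, b⟩ := l
          have hsat := hj _ hl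
          rcases z with x | y
          · simp only [Sum.elim_inl] at hsat
            exact (hxiff x _).2 hsat
          · exact hyM y _
        have h2 := hmodM _ (hRwi M i' j) hbody
        simpa using h2
    have hssub : M' ⊂ M :=
      Set.ssubset_iff_subset_ne.mpr ⟨hsubM, fun he => mw.1 (he.symm ▸ hwM)⟩
    apply hmin M' hssub
    intro s hs
    obtain ⟨r, hrP, hneg, rfl⟩ := hs
    rw [hPdef] at hrP
    simp only [EGProgram, Set.mem_setOf_eq] at hrP
    rcases hrP with ⟨z, rfl⟩ | ⟨y, b, rfl⟩ | rfl | rfl | ⟨i', j, rfl⟩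
    · intro _
      rcases z with x | y
      · exact ⟨Sum.inl (Sum.inl x, I x), by cases h : I x <;> simp, (mx x _).2 rfl⟩
      · exact ⟨Sum.inl (Sum.inr y, J y), by cases h : J y <;> simp, (my y _).2 rfl⟩
    · intro hbody
      exact absurd (hbody (Sum.inr none) (by simp)) (fun h => mw.1 h)
    · intro hbody
      exfalso
      have hwi0 := hbody (Sum.inr (some i)) (by simp)
      obtain ⟨j, hj⟩ := (mwi i).1 hwi0
      obtain ⟨l, hl, hsat⟩ := hcon j
      have hcontr := hj l hl
      rw [hsat] at hcontr
      simp at hcontr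
    · exact absurd hwM (hneg (Sum.inr none) (by simp))
    · intro hbody
      refine ⟨Sum.inr (some i'), by simp, (mwi i').2 ⟨j, ?_⟩⟩
      intro l hl
      obtain ⟨z, b⟩ := l
      have hmem := hbody (Sum.inl (z, !b)) (by
        simp only [Finset.mem_image]
        exact ⟨(z, !b), ⟨(z, b), hl, rfl⟩, rfl⟩)
      rcases z with x | y
      · simpa using (mx x _).1 hmem
      · simpa using (my y _).1 hmem
end

section
/- For all integers k, h, A, E with 1 ≤ h < k, A ≥ h and E ≥ k−h, p(k−h, E, 2^h·binom(A,h)) ≤ q^gctd(h,k−h,A,E) ≤ p(k−h, E, binom(A,h)), where p(k−h, E, m) denotes the fraction of satisfiable m-tuples of (k−h)-clauses over an E-element variable set. -/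
open Filter

/-- A set of `h` literals over `h` distinct variables among `A` universal
variables. There are `2^h·binom(A,h)` such sets. -/
def HLitSet (A h : ℕ) : Type :=
  {L : Finset (Fin A × Bool) // L.card = h ∧ (L.image Prod.fst).card = h}

/-- A generalized controlled instance over `A` universal and `E` existential
variables: a function assigning to each `h`-literal set `L` over the universal
variables a `c`-clause `g(L)` over the existential variables. (For `k`-clauses
in the matrix, take `c = k - h`.) Its matrix consists of the clauses
`(⋁L) ∨ g(L)`. -/
def GCtdInst (A E h c : ℕ) : Type := HLitSet A h → Clause E c

/-- The QBF `∀X∃Y` of the matrix of a generalized controlled instance `g` is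
true: for every assignment `I` of the universal variables there is an
assignment `J` of the existential variables satisfying at least one literal of
every clause `(⋁L) ∨ g(L)` of the matrix. -/
def GCtdTrue {A E h c : ℕ} (g : GCtdInst A E h c) : Prop :=
  ∀ I : Fin A → Bool, ∃ J : Fin E → Bool, ∀ L : HLitSet A h,
    (∃ l ∈ L.val, I l.1 = l.2) ∨ ∃ p ∈ (g L).val, J p.1 = p.2

/-- `q^gctd(h,c,A,E)`: the fraction of generalized controlled instances `g`
for which the QBF `∀X∃Y` of the matrix of `g` is true. -/
noncomputable def qGCtd (h c A E : ℕ) : ℝ :=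
  (Nat.card {g : GCtdInst A E h c // GCtdTrue g} : ℝ) /
    (Nat.card (GCtdInst A E h c) : ℝ)

instance (n k : ℕ) : Fintype (Clause n k) :=
  inferInstanceAs (Fintype {C : Finset (Fin n × Bool) // C.card = k ∧ (C.image Prod.fst).card = k})

instance (n k : ℕ) : DecidableEq (Clause n k) :=
  inferInstanceAs (DecidableEq {C : Finset (Fin n × Bool) // C.card = k ∧ (C.image Prod.fst).card = k})

theorem card_clause (n k : ℕ) :
    Nat.card (Clause n k) = 2 ^ k * n.choose k := by
  classical
  have key : ∀ (s : Finset (Fin n)) (f : {x // x ∈ s} → Bool),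
      (s.attach.image (fun v : {x // x ∈ s} => (v.1, f v))).image Prod.fst = s := by
    intro s f
    rw [Finset.image_image]
    exact s.attach_image_val
  have hinj : ∀ (s : Finset (Fin n)) (f : {x // x ∈ s} → Bool),
      Set.InjOn (fun v : {x // x ∈ s} => (v.1, f v)) s.attach := by
    intro s f a _ b _ hab
    exact Subtype.ext (congrArg Prod.fst hab)
  set ψ : (Σ T : {s : Finset (Fin n) // s.card = k}, ({x // x ∈ T.1} → Bool)) → Clause n k :=
    fun p => ⟨p.1.1.attach.image (fun v : {x // x ∈ p.1.1} => (v.1, p.2 v)),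
      by rw [Finset.card_image_of_injOn (hinj p.1.1 p.2), Finset.card_attach, p.1.2],
      by rw [key p.1.1 p.2, p.1.2]⟩ with hψ
  have hbij : Function.Bijective ψ := by
    constructor
    · rintro ⟨⟨T, hT⟩, f⟩ ⟨⟨T', hT'⟩, f'⟩ hpq
      have h1 : T.attach.image (fun v : {x // x ∈ T} => (v.1, f v)) =
          T'.attach.image (fun v : {x // x ∈ T'} => (v.1, f' v)) := congrArg Subtype.val hpq
      have hTT : T = T' := by
        have h2 := congrArg (Finset.image Prod.fst) h1
        rwa [key, key] at h2
      subst hTT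
      have hff : f = f' := by
        funext v
        have hv : (v.1, f v) ∈ T.attach.image (fun v : {x // x ∈ T} => (v.1, f' v)) := by
          rw [← h1]
          exact Finset.mem_image_of_mem _ (Finset.mem_attach _ v)
        rw [Finset.mem_image] at hv
        obtain ⟨w, -, hw⟩ := hv
        have hwv : w = v := Subtype.ext (congrArg Prod.fst hw)
        subst hwv
        exact (congrArg Prod.snd hw).symm
      subst hff
      rfl
    · rintro ⟨C, hC1, hC2⟩
      have hinjOn : Set.InjOn Prod.fst (C : Set (Fin n × Bool)) :=
        Finset.card_image_iff.mp (by rw [hC2, hC1])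
      refine ⟨⟨⟨C.image Prod.fst, hC2⟩,
        fun v : {x // x ∈ C.image Prod.fst} => decide ((v.1, true) ∈ C)⟩, ?_⟩
      apply Subtype.ext
      show (C.image Prod.fst).attach.image
        (fun v : {x // x ∈ C.image Prod.fst} => (v.1, decide ((v.1, true) ∈ C))) = C
      ext ⟨v, b⟩
      constructor
      · intro hmem
        rw [Finset.mem_image] at hmem
        obtain ⟨w, -, hw⟩ := hmem
        have hv : w.1 = v := congrArg Prod.fst hw
        have hb : decide ((w.1, true) ∈ C) = b := congrArg Prod.snd hw
        rw [hv] at hb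
        by_cases hvt : (v, true) ∈ C
        · have hbt : b = true := by rw [← hb]; simp [hvt]
          rw [hbt]; exact hvt
        · have hbf : b = false := by rw [← hb]; simp [hvt]
          have hvim : v ∈ C.image Prod.fst := hv ▸ w.2
          rw [Finset.mem_image] at hvim
          obtain ⟨⟨l1, l2⟩, hl, hl1⟩ := hvim
          simp only at hl1
          subst hl1
          cases l2 with
          | true => exact absurd hl hvt
          | false => rw [hbf]; exact hl
      · intro hmem
        have hv : v ∈ C.image Prod.fst := Finset.mem_image_of_mem Prod.fst hmem
        rw [Finset.mem_image]
        refine ⟨⟨v, hv⟩, Finset.mem_attach _ _, ?_⟩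
        have hb : decide ((v, true) ∈ C) = b := by
          cases b with
          | true => simp only [decide_eq_true_eq]; exact hmem
          | false =>
            simp only [decide_eq_false_iff_not]
            intro hvt
            have h2 := hinjOn (Finset.mem_coe.mpr hvt) (Finset.mem_coe.mpr hmem) rfl
            simpa using congrArg Prod.snd h2
        show ((v : Fin n), decide ((v, true) ∈ C)) = (v, b)
        rw [hb]
  have hcard := Nat.card_eq_of_bijective ψ hbij
  rw [← hcard, Nat.card_eq_fintype_card, Fintype.card_sigma]
  have hterm : ∀ T : {s : Finset (Fin n) // s.card = k},
      Fintype.card ({x // x ∈ T.1} → Bool) = 2 ^ k := by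
    intro T
    rw [Fintype.card_fun, Fintype.card_coe, T.2, Fintype.card_bool]
  calc ∑ T : {s : Finset (Fin n) // s.card = k}, Fintype.card ({x // x ∈ T.1} → Bool)
      = ∑ _T : {s : Finset (Fin n) // s.card = k}, 2 ^ k :=
        Finset.sum_congr rfl (fun T _ => hterm T)
    _ = n.choose k * 2 ^ k := by
        rw [Finset.sum_const, Finset.card_univ, Fintype.card_finset_len, smul_eq_mul,
          Fintype.card_fin]
    _ = 2 ^ k * n.choose k := Nat.mul_comm _ _

instance (A h : ℕ) : Fintype (HLitSet A h) :=
  inferInstanceAs (Fintype {C : Finset (Fin A × Bool) // C.card = h ∧ (C.image Prod.fst).card = h})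

instance (A h : ℕ) : DecidableEq (HLitSet A h) :=
  inferInstanceAs (DecidableEq {C : Finset (Fin A × Bool) // C.card = h ∧ (C.image Prod.fst).card = h})

instance (A E h c : ℕ) : Fintype (GCtdInst A E h c) :=
  inferInstanceAs (Fintype (HLitSet A h → Clause E c))

theorem card_hLitSet (A h : ℕ) : Nat.card (HLitSet A h) = 2 ^ h * A.choose h :=
  card_clause A h

theorem card_tuple (E c m : ℕ) :
    Nat.card (Fin m → Clause E c) = Nat.card (Clause E c) ^ m := by
  rw [Nat.card_fun]
  congr 1
  simp [Nat.card_eq_fintype_card]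

theorem card_allTrue (A h : ℕ) :
    Nat.card {L : HLitSet A h // ∀ l ∈ L.val, l.2 = true} = A.choose h := by
  classical
  have imgtrue : ∀ s : Finset (Fin A),
      (s.image (fun v => (v, true))).image Prod.fst = s := by
    intro s
    rw [Finset.image_image]
    exact Finset.image_id
  have e : {L : HLitSet A h // ∀ l ∈ L.val, l.2 = true} ≃ {s : Finset (Fin A) // s.card = h} :=
    { toFun := fun L => ⟨L.1.1.image Prod.fst, L.1.2.2⟩
      invFun := fun T => ⟨⟨T.1.image (fun v => (v, true)),
        by
          rw [Finset.card_image_of_injective _ (fun a b hab => congrArg Prod.fst hab)]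
          exact T.2,
        by rw [imgtrue]; exact T.2⟩,
        by
          intro l hl
          rw [Finset.mem_image] at hl
          obtain ⟨v, -, rfl⟩ := hl
          rfl⟩
      left_inv := by
        rintro ⟨L, hL⟩
        apply Subtype.ext
        apply Subtype.ext
        show (L.1.image Prod.fst).image (fun v => (v, true)) = L.1
        ext ⟨v, b⟩
        constructor
        · intro hmem
          rw [Finset.mem_image] at hmem
          obtain ⟨v', hv', hv'eq⟩ := hmem
          have hv1 : v' = v := congrArg Prod.fst hv'eq
          have hb : true = b := congrArg Prod.snd hv'eq
          subst hv1
          rw [Finset.mem_image] at hv'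
          obtain ⟨l, hl, hl1⟩ := hv'
          have hl2 : l.2 = b := (hL l hl).trans hb
          have hlv : l = (v', b) := Prod.ext hl1 hl2
          rw [← hlv]
          exact hl
        · intro hmem
          have hb : b = true := hL (v, b) hmem
          subst hb
          exact Finset.mem_image_of_mem _ (Finset.mem_image_of_mem Prod.fst hmem)
      right_inv := by
        rintro ⟨T, hT⟩
        apply Subtype.ext
        exact imgtrue T }
  rw [Nat.card_congr e, Nat.card_eq_fintype_card, Fintype.card_finset_len, Fintype.card_fin]

theorem clause_card_pos {E c : ℕ} (hcE : c ≤ E) : 0 < Nat.card (Clause E c) := by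
  rw [card_clause]
  exact Nat.mul_pos (Nat.two_pow_pos c) (Nat.choose_pos hcE)

theorem lower_aux (h c A E : ℕ) (hcE : c ≤ E) :
    pSat c E (2 ^ h * A.choose h) ≤ qGCtd h c A E := by
  classical
  have hD : 0 < Nat.card (Clause E c) := clause_card_pos hcE
  set N2 := 2 ^ h * A.choose h with hN2
  have hN : Nat.card (HLitSet A h) = N2 := card_hLitSet A h
  have e : HLitSet A h ≃ Fin N2 := Finite.equivFinOfCardEq hN
  have hle := Nat.card_le_card_of_injective
    (fun F : {F : Fin N2 → Clause E c // CNFSat F} =>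
      (⟨fun L => F.1 (e L), fun I => by
        obtain ⟨σ, hσ⟩ := F.2
        exact ⟨σ, fun L => Or.inr (hσ (e L))⟩⟩ : {g : GCtdInst A E h c // GCtdTrue g}))
    (by
      intro F F' hFF
      apply Subtype.ext
      funext i
      have h2 := congrArg (fun g : {g : GCtdInst A E h c // GCtdTrue g} => g.1 (e.symm i)) hFF
      simpa using h2)
  have hd1 : Nat.card (Fin N2 → Clause E c) = Nat.card (Clause E c) ^ N2 := card_tuple E c N2
  have hd2 : Nat.card (GCtdInst A E h c) = Nat.card (Clause E c) ^ N2 := by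
    have h0 : Nat.card (GCtdInst A E h c) = Nat.card (HLitSet A h → Clause E c) := rfl
    rw [h0, Nat.card_fun, hN]
  unfold pSat qGCtd
  rw [hd1, hd2]
  have hpos : (0 : ℝ) < ((Nat.card (Clause E c) ^ N2 : ℕ) : ℝ) := by
    exact_mod_cast pow_pos hD N2
  rw [div_le_div_iff₀ hpos hpos]
  have hle' : ((Nat.card {F : Fin N2 → Clause E c // CNFSat F} : ℕ) : ℝ) ≤
      ((Nat.card {g : GCtdInst A E h c // GCtdTrue g} : ℕ) : ℝ) := by exact_mod_cast hle
  exact mul_le_mul_of_nonneg_right hle' (le_of_lt hpos)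

theorem upper_aux (h c A E : ℕ) (hcE : c ≤ E) :
    qGCtd h c A E ≤ pSat c E (A.choose h) := by
  classical
  have hD : 0 < Nat.card (Clause E c) := clause_card_pos hcE
  set M := A.choose h with hMdef
  set N2 := 2 ^ h * A.choose h with hN2
  have hN : Nat.card (HLitSet A h) = N2 := card_hLitSet A h
  set P : HLitSet A h → Prop := fun L => ∀ l ∈ L.val, l.2 = true with hPdef
  have hMP : Nat.card {L : HLitSet A h // P L} = M := card_allTrue A h
  set R := Nat.card {L : HLitSet A h // ¬ P L} with hRdef
  have hsum : M + R = N2 := by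
    rw [← hMP, ← hN, hRdef, ← Nat.card_sum]
    exact Nat.card_congr (Equiv.sumCompl P)
  have e1 : {L : HLitSet A h // P L} ≃ Fin M := Finite.equivFinOfCardEq hMP
  have e2 : {L : HLitSet A h // ¬ P L} ≃ Fin R := Finite.equivFinOfCardEq rfl
  have hle := Nat.card_le_card_of_injective
    (fun g : {g : GCtdInst A E h c // GCtdTrue g} =>
      ((⟨fun i => g.1 (e1.symm i).1, by
          obtain ⟨J, hJ⟩ := g.2 (fun _ => false)
          refine ⟨J, fun i => ?_⟩
          rcases hJ (e1.symm i).1 with hL | hsat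
          · obtain ⟨l, hl, hfl⟩ := hL
            have hlt : l.2 = true := (e1.symm i).2 l hl
            simp [hlt] at hfl
          · exact hsat⟩ : {F : Fin M → Clause E c // CNFSat F}),
        fun i => g.1 (e2.symm i).1))
    (by
      intro g g' hgg
      apply Subtype.ext
      funext L
      by_cases hPL : P L
      · have h2 := congrArg
          (fun p : {F : Fin M → Clause E c // CNFSat F} × (Fin R → Clause E c) =>
            p.1.1 (e1 ⟨L, hPL⟩)) hgg
        simpa using h2
      · have h2 := congrArg
          (fun p : {F : Fin M → Clause E c // CNFSat F} × (Fin R → Clause E c) =>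
            p.2 (e2 ⟨L, hPL⟩)) hgg
        simpa using h2)
  have hprod : Nat.card ({F : Fin M → Clause E c // CNFSat F} × (Fin R → Clause E c)) =
      Nat.card {F : Fin M → Clause E c // CNFSat F} * Nat.card (Clause E c) ^ R := by
    rw [Nat.card_prod, card_tuple]
  rw [hprod] at hle
  have hd2 : Nat.card (GCtdInst A E h c) = Nat.card (Clause E c) ^ N2 := by
    have h0 : Nat.card (GCtdInst A E h c) = Nat.card (HLitSet A h → Clause E c) := rfl
    rw [h0, Nat.card_fun, hN]
  have hdM : Nat.card (Fin M → Clause E c) = Nat.card (Clause E c) ^ M := card_tuple E c M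
  unfold qGCtd pSat
  rw [hd2, hdM]
  have hposD : (0 : ℝ) < (Nat.card (Clause E c) : ℝ) := by exact_mod_cast hD
  have hpos1 : (0 : ℝ) < ((Nat.card (Clause E c) ^ N2 : ℕ) : ℝ) := by
    exact_mod_cast pow_pos hD N2
  have hpos2 : (0 : ℝ) < ((Nat.card (Clause E c) ^ M : ℕ) : ℝ) := by
    exact_mod_cast pow_pos hD M
  rw [div_le_div_iff₀ hpos1 hpos2]
  push_cast
  have key : ((Nat.card {g : GCtdInst A E h c // GCtdTrue g} : ℕ) : ℝ) ≤
      (Nat.card {F : Fin M → Clause E c // CNFSat F} : ℝ) * (Nat.card (Clause E c) : ℝ) ^ R := by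
    exact_mod_cast hle
  calc ((Nat.card {g : GCtdInst A E h c // GCtdTrue g} : ℕ) : ℝ) *
        (Nat.card (Clause E c) : ℝ) ^ M
      ≤ ((Nat.card {F : Fin M → Clause E c // CNFSat F} : ℝ) *
          (Nat.card (Clause E c) : ℝ) ^ R) * (Nat.card (Clause E c) : ℝ) ^ M :=
        mul_le_mul_of_nonneg_right key (by positivity)
    _ = (Nat.card {F : Fin M → Clause E c // CNFSat F} : ℝ) *
          (Nat.card (Clause E c) : ℝ) ^ N2 := by
        rw [mul_assoc, ← pow_add, show R + M = N2 by omega]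

/-- for all integers `k`, `h`, `A`, `E` with `1 ≤ h < k`,
`A ≥ h` and `E ≥ k−h`,
`p(k−h,E,2^h·binom(A,h)) ≤ q^gctd(h,k−h,A,E) ≤ p(k−h,E,binom(A,h))`. -/
theorem stmt_13 (k h A E : ℕ) (hh : 1 ≤ h) (hhk : h < k)
    (hA : h ≤ A) (hE : k - h ≤ E) :
    pSat (k - h) E (2 ^ h * A.choose h) ≤ qGCtd h (k - h) A E ∧
    qGCtd h (k - h) A E ≤ pSat (k - h) E (A.choose h) := by
  exact ⟨lower_aux h (k - h) A E hE, upper_aux h (k - h) A E hE⟩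
end

section
/- Fix k ≥ 2, disjoint variable sets X, Y with |X| = A ≥ 1 and |Y| = E ≥ k−1, and an assignment I : X → Bool. The map sending a controlled instance f to the A-tuple (f(l))_{l}, indexed by the A literals l over X falsified by I, is surjective onto the set of A-tuples of (k−1)-clauses over Y, and all of its fibers have the same cardinality. Consequently, the fraction of controlled instances f for which the formula F_f|_I (the A-tuple of clauses f(l) over those l falsified by I) is satisfiable equals p(k−1, E, A), the fraction of satisfiable A-tuples of (k−1)-clauses over an E-element variable set. -/
/-!
The literals falsified by `I` are exactly the `(i, !I i)`, one per variable, so restricting a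
controlled instance to them is the first projection of the splitting
`((Fin A × Bool) → β) ≃ ({falsified} → β) × ({satisfied} → β)`. Every fiber of that
projection is a copy of the second factor, so preimages are counted by the first factor alone,
and after reindexing the falsified literals by `Fin A` the satisfiable fraction is `pSat`.
-/

instance Clause.finite (n k : ℕ) : Finite (Clause n k) := by
  unfold Clause; infer_instance

theorem Clause.nonempty {n k : ℕ} (h : k ≤ n) : Nonempty (Clause n k) := by
  obtain ⟨t, -, ht⟩ := Finset.exists_subset_card_eq (s := (Finset.univ : Finset (Fin n)))
    (by simpa using h)
  have h_fst : (t.image fun v => (v, true)).image Prod.fst = t := by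
    rw [Finset.image_image]; ext; simp
  exact ⟨⟨t.image fun v => (v, true),
    by rw [Finset.card_image_of_injective _ fun _ _ h => congrArg Prod.fst h, ht],
    by rw [h_fst, ht]⟩⟩

section Restrict

variable {α β : Type*} (p : α → Prop) [DecidablePred p]

theorem restrict_surjective [Nonempty β] :
    Function.Surjective fun (f : α → β) (x : {x // p x}) => f x :=
  Prod.fst_surjective.comp (Equiv.piEquivPiSubtypeProd p fun _ => β).surjective

theorem card_restrict_preimage (Q : ({x // p x} → β) → Prop) :
    Nat.card {f : α → β // Q fun x => f x} =
      Nat.card {g // Q g} * Nat.card ({x // ¬ p x} → β) := by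
  rw [← Nat.card_prod]
  exact Nat.card_congr <| ((Equiv.piEquivPiSubtypeProd p fun _ => β).subtypeEquiv
    (p := fun f => Q fun x => f x) (q := fun g => Q g.1) fun _ => Iff.rfl).trans
    Equiv.prodSubtypeFstEquivSubtypeProd

theorem card_restrict_fiber (y : {x // p x} → β) :
    Nat.card {f : α → β // (fun x : {x // p x} => f x) = y} = Nat.card ({x // ¬ p x} → β) := by
  rw [card_restrict_preimage p (· = y), Nat.card_unique, one_mul]

theorem card_restrict_preimage_div [Finite α] [Finite β] [Nonempty β]
    (Q : ({x // p x} → β) → Prop) :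
    (Nat.card {f : α → β // Q fun x => f x} : ℝ) / Nat.card (α → β) =
      Nat.card {g // Q g} / Nat.card ({x // p x} → β) := by
  have h_split : Nat.card (α → β) = Nat.card ({x // p x} → β) * Nat.card ({x // ¬ p x} → β) := by
    rw [← Nat.card_prod]; exact Nat.card_congr (Equiv.piEquivPiSubtypeProd p fun _ => β)
  have h_pos : (0 : ℝ) < Nat.card ({x // ¬ p x} → β) := by exact_mod_cast Nat.card_pos
  rw [card_restrict_preimage, h_split]
  push_cast
  exact mul_div_mul_right _ _ h_pos.ne'

end Restrict

def falsifiedLiteralEquiv {α : Type*} (I : α → Bool) : {l : α × Bool // I l.1 ≠ l.2} ≃ α where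
  toFun l := l.1.1
  invFun i := ⟨(i, !I i), by simp⟩
  left_inv := by
    rintro ⟨⟨i, b⟩, h⟩
    cases hI : I i <;> cases b <;> simp_all
  right_inv _ := rfl

theorem pSat_eq_card_div_of_equiv {ι : Type*} {n k m : ℕ} (e : ι ≃ Fin m) :
    (Nat.card {F : ι → Clause n k // ∃ σ : Fin n → Bool, ∀ i, ClauseSat σ (F i)} : ℝ) /
      Nat.card (ι → Clause n k) = pSat k n m := by
  let reindex := e.arrowCongr (Equiv.refl (Clause n k))
  rw [pSat, Nat.card_congr reindex, Nat.card_congr (reindex.subtypeEquiv fun F => ?_)]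
  exact exists_congr fun σ => e.forall_congr_left

theorem stmt_19_general (k A E : ℕ) (hE : k - 1 ≤ E)
    (I : Fin A → Bool) :
    Function.Surjective
      (fun (f : CtdInst A E (k - 1)) (l : {l : Fin A × Bool // I l.1 ≠ l.2}) =>
        f l.val) ∧
    (∀ y y' : {l : Fin A × Bool // I l.1 ≠ l.2} → Clause E (k - 1),
      Nat.card {f : CtdInst A E (k - 1) //
          (fun l : {l : Fin A × Bool // I l.1 ≠ l.2} => f l.val) = y} =
      Nat.card {f : CtdInst A E (k - 1) //
          (fun l : {l : Fin A × Bool // I l.1 ≠ l.2} => f l.val) = y'}) ∧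
    (Nat.card {f : CtdInst A E (k - 1) // ∃ J : Fin E → Bool,
          ∀ l : Fin A × Bool, I l.1 ≠ l.2 → ∃ p ∈ (f l).val, J p.1 = p.2} : ℝ) /
        (Nat.card (CtdInst A E (k - 1)) : ℝ) = pSat (k - 1) E A := by
  have := Clause.nonempty hE
  let falsified (l : Fin A × Bool) : Prop := I l.1 ≠ l.2
  refine ⟨restrict_surjective falsified, fun y y' => ?_, ?_⟩
  · exact (card_restrict_fiber falsified y).trans (card_restrict_fiber falsified y').symm
  · have h_sat := card_restrict_preimage_div (β := Clause E (k - 1)) falsified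
      fun g => ∃ J : Fin E → Bool, ∀ l, ClauseSat J (g l)
    rw [← pSat_eq_card_div_of_equiv (falsifiedLiteralEquiv I), ← h_sat]
    simp only [falsified, Subtype.forall, ClauseSat, CtdInst]

/-- fix `k ≥ 2`, `A ≥ 1`, `E ≥ k−1` and an assignment
`I : X → Bool`. The map sending a controlled instance `f` to the `A`-tuple
`(f(l))_l`, indexed by the `A` literals `l` over `X` falsified by `I`, is
surjective onto the set of such tuples of `(k−1)`-clauses over `Y`, and all of
its fibers have the same cardinality. Consequently, the fraction of controlled
instances `f` for which `F_f|_I` is satisfiable equals `p(k−1,E,A)`. -/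
theorem stmt_19 (k A E : ℕ) (hk : 2 ≤ k) (hA : 1 ≤ A) (hE : k - 1 ≤ E)
    (I : Fin A → Bool) :
    Function.Surjective
      (fun (f : CtdInst A E (k - 1)) (l : {l : Fin A × Bool // I l.1 ≠ l.2}) =>
        f l.val) ∧
    (∀ y y' : {l : Fin A × Bool // I l.1 ≠ l.2} → Clause E (k - 1),
      Nat.card {f : CtdInst A E (k - 1) //
          (fun l : {l : Fin A × Bool // I l.1 ≠ l.2} => f l.val) = y} =
      Nat.card {f : CtdInst A E (k - 1) //
          (fun l : {l : Fin A × Bool // I l.1 ≠ l.2} => f l.val) = y'}) ∧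
    (Nat.card {f : CtdInst A E (k - 1) // ∃ J : Fin E → Bool,
          ∀ l : Fin A × Bool, I l.1 ≠ l.2 → ∃ p ∈ (f l).val, J p.1 = p.2} : ℝ) /
        (Nat.card (CtdInst A E (k - 1)) : ℝ) = pSat (k - 1) E A :=
  stmt_19_general k A E hE I
end
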